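/- arXiv:2403.05144 — 5 statements merged into one kernel-verified Lean document; each statement's English description precedes it below -/
import Mathlib

section
/- Let I^{(1)},…,I^{(R)} ∈ ℝ^{N×N} be mask matrices, Λ ∈ ℝ^{N×N}, and apply one step (step size Δt) of an explicit partitioned Runge–Kutta method with strictly lower triangular A^{(r)} and shared weights b to the coefficient-partitioned linear system with F^{(r)}(U) = I^{(r)} Λ U. If w ∈ ℝ^N satisfies wᵀΛ = 0, then wᵀU⁺ = wᵀU, i.e., the weighted sum Σ_i w_i U_i is conserved by the step. -/
/-!
Summing the partitioned right-hand sides over `r` gives `∑ r, I⁽ʳ⁾ Λ Y = Λ Y` because the masks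
sum to the identity, so `w ⬝ᵥ ∑ r, K i r = (wᵀ Λ) ⬝ᵥ Y_i = 0` at every stage. Since the weights
`b` are shared, the update `U⁺ - U = Δt ∑ i, b i ∑ r, K i r` is a combination of these stage sums
and is therefore orthogonal to `w`.
-/

open Matrix

namespace Matrix

variable {n ι κ α : Type*} [Fintype n] [Fintype ι] [Fintype κ] [CommSemiring α]

theorem sum_mul_mulVec_of_sum_eq_one [DecidableEq n] {P : ι → Matrix n n α} (hP : ∑ r, P r = 1)
    (Λ : Matrix n n α) (v : n → α) : ∑ r, (P r * Λ) *ᵥ v = Λ *ᵥ v := by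
  rw [← sum_mulVec, ← Finset.sum_mul, hP, one_mul]

theorem dotProduct_sum_mul_mulVec_eq_zero [DecidableEq n] {P : ι → Matrix n n α}
    (hP : ∑ r, P r = 1) {Λ : Matrix n n α} {w : n → α} (hw : w ᵥ* Λ = 0) (v : n → α) :
    w ⬝ᵥ ∑ r, (P r * Λ) *ᵥ v = 0 := by
  rw [sum_mul_mulVec_of_sum_eq_one hP, dotProduct_mulVec, hw, zero_dotProduct]

theorem dotProduct_add_smul_sum_smul_eq {w : n → α} {K : κ → ι → n → α}
    (hK : ∀ i, w ⬝ᵥ ∑ r, K i r = 0) (U : n → α) (h : α) (b : κ → α) :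
    w ⬝ᵥ (U + h • ∑ i, ∑ r, b i • K i r) = w ⬝ᵥ U := by
  have hstage : ∀ i, w ⬝ᵥ ∑ r, b i • K i r = 0 := fun i => by
    rw [← Finset.smul_sum, dotProduct_smul, hK i, smul_zero]
  simp only [dotProduct_add, dotProduct_smul, dotProduct_sum, hstage, Finset.sum_const_zero,
    smul_zero, add_zero]

end Matrix

theorem stmt_2_general {N R S : ℕ}
    (Imask : Fin R → Matrix (Fin N) (Fin N) ℝ)
    (hsum : ∑ r, Imask r = 1)
    (Λ : Matrix (Fin N) (Fin N) ℝ)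
    (A : Fin R → Matrix (Fin S) (Fin S) ℝ)
    (b : Fin S → ℝ) (Δt : ℝ)
    (w : Fin N → ℝ) (hw : Matrix.vecMul w Λ = 0)
    (U : Fin N → ℝ)
    (K : Fin S → Fin R → (Fin N → ℝ))
    (hK : ∀ (i : Fin S) (r : Fin R),
      K i r = (Imask r * Λ).mulVec (U + Δt • ∑ j, ∑ s, A s i j • K j s))
    (Uplus : Fin N → ℝ)
    (hUplus : Uplus = U + Δt • ∑ i, ∑ r, b i • K i r) :
    ∑ i, w i * Uplus i = ∑ i, w i * U i := by
  have hstage : ∀ i, w ⬝ᵥ ∑ r, K i r = 0 := fun i => by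
    rw [Finset.sum_congr rfl fun r _ => hK i r]
    exact dotProduct_sum_mul_mulVec_eq_zero hsum hw _
  subst hUplus
  exact dotProduct_add_smul_sum_smul_eq hstage U Δt b

/-- For the coefficient-partitioned linear system `F r U = I^(r) Λ U` built
from mask matrices and `Λ`, if `w` is a left null vector of `Λ` (`wᵀΛ = 0`), then one step of
an explicit partitioned Runge–Kutta method with strictly lower triangular Butcher matrices
and shared weights conserves the weighted sum `Σ_i w_i U_i`. -/
theorem stmt_2 {N R S : ℕ}
    (Imask : Fin R → Matrix (Fin N) (Fin N) ℝ)
    (hdiag : ∀ r, ∃ d : Fin N → ℝ, (∀ i, d i = 0 ∨ d i = 1) ∧ Imask r = Matrix.diagonal d)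
    (hsum : ∑ r, Imask r = 1)
    (Λ : Matrix (Fin N) (Fin N) ℝ)
    (A : Fin R → Matrix (Fin S) (Fin S) ℝ)
    (hA : ∀ (r : Fin R) (i j : Fin S), i ≤ j → A r i j = 0)
    (b : Fin S → ℝ) (Δt : ℝ) (hΔt : 0 < Δt)
    (w : Fin N → ℝ) (hw : Matrix.vecMul w Λ = 0)
    (U : Fin N → ℝ)
    (K : Fin S → Fin R → (Fin N → ℝ))
    (hK : ∀ (i : Fin S) (r : Fin R),
      K i r = (Imask r * Λ).mulVec (U + Δt • ∑ j, ∑ s, A s i j • K j s))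
    (Uplus : Fin N → ℝ)
    (hUplus : Uplus = U + Δt • ∑ i, ∑ r, b i • K i r) :
    ∑ i, w i * Uplus i = ∑ i, w i * U i :=
  stmt_2_general Imask hsum Λ A b Δt w hw U K hK Uplus hUplus
end

section
/- Let I^{(1)},…,I^{(R)} ∈ ℝ^{N×N} be mask matrices, Λ ∈ ℝ^{N×N}, and consider one step of an explicit partitioned Runge–Kutta method with strictly lower triangular A^{(r)} ∈ ℝ^{S×S}, shared weights b and shared abscissae c applied to the system with F^{(r)}(U) = I^{(r)} Λ U. Assume internal consistency, Σ_{j=1}^S a^{(r)}_{ij} = c_i for all i = 1,…,S and all r = 1,…,R, and the order conditions Σ_{i=1}^S b_i = 1 and Σ_{i=1}^S b_i c_i = 1/2. Then the one-step matrix D(Δt), which is a polynomial in Δt with coefficients in ℝ^{N×N}, satisfies D(Δt) = I_N + Δt Λ + (Δt²/2) Λ² + Σ_{k=3}^{S} Δt^k C_k for some matrices C_k ∈ ℝ^{N×N}; i.e., the scheme is second-order consistent for the linear partitioned problem. -/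
/-!
Since every `A⁽ʳ⁾` is strictly lower triangular, the stage equations can be solved by forward
substitution: `K_i^{(r)} = (∑_{k ≤ i} Δt^k Q_k(i, r)) U` with `Q_0(i, r) = I^{(r)} Λ` and
`Q_{k+1}(i, r) = I^{(r)} Λ ∑_{j,s} a^{(s)}_{ij} Q_k(j, s)`, and `Q_k(i, r) = 0` for `k > i`.
Hence `D(Δt) = I + ∑_{k<S} Δt^{k+1} ∑_{i,r} b_i Q_k(i, r)`. Because the masks sum to the identity,
the `k = 0` coefficient is `(∑ b_i) Λ = Λ`; internal consistency collapses
`∑_{j,s} a^{(s)}_{ij} I^{(s)} Λ` to `c_i Λ`, so the `k = 1` coefficient is `(∑ b_i c_i) Λ² = Λ²/2`.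
-/

open Finset Matrix

theorem Finset.sum_range_succ_eq_sum_Icc_one {M : Type*} [AddCommMonoid M] (f : ℕ → M) (n : ℕ) :
    ∑ k ∈ range n, f (k + 1) = ∑ k ∈ Icc 1 n, f k := by
  rw [range_eq_Ico, sum_Ico_add', zero_add, Ico_add_one_right_eq_Icc]

theorem Finset.sum_Icc_one_eq_add_add_sum_Icc_three {M : Type*} [AddCommMonoid M] (f : ℕ → M)
    {n : ℕ} (hf : ∀ k, n < k → f k = 0) :
    ∑ k ∈ Icc 1 n, f k = f 1 + f 2 + ∑ k ∈ Icc 3 n, f k := by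
  rcases n with _ | _ | n
  · simp [hf 1 one_pos, hf 2 two_pos]
  · simp [hf 2 one_lt_two]
  · rw [← insert_Icc_add_one_left_eq_Icc (by omega), sum_insert (by simp),
      ← insert_Icc_add_one_left_eq_Icc (by omega), sum_insert (by simp), ← add_assoc]
    norm_num

namespace PartitionedRK

variable {N R S : ℕ} (Imask : Fin R → Matrix (Fin N) (Fin N) ℝ)
  (Λ : Matrix (Fin N) (Fin N) ℝ) (A : Fin R → Matrix (Fin S) (Fin S) ℝ)

def stageCoeff : ℕ → Fin S → Fin R → Matrix (Fin N) (Fin N) ℝ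
  | 0, _, r => Imask r * Λ
  | k + 1, i, r => Imask r * Λ * ∑ j, ∑ s, A s i j • stageCoeff k j s

def stageMatrix (Δt : ℝ) (i : Fin S) (r : Fin R) : Matrix (Fin N) (Fin N) ℝ :=
  ∑ k ∈ range S, Δt ^ k • stageCoeff Imask Λ A k i r

variable {Imask Λ A}

theorem stageCoeff_eq_zero (hA : ∀ (r : Fin R) (i j : Fin S), i ≤ j → A r i j = 0) :
    ∀ {k : ℕ} {i : Fin S}, (i : ℕ) < k → ∀ r, stageCoeff Imask Λ A k i r = 0
  | k + 1, i, hik, r => by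
    have hzero : ∑ j, ∑ s, A s i j • stageCoeff Imask Λ A k j s = 0 := by
      refine sum_eq_zero fun j _ => sum_eq_zero fun s _ => ?_
      rcases le_or_gt i j with hij | hji
      · rw [hA s i j hij, zero_smul]
      · rw [stageCoeff_eq_zero hA (by omega : (j : ℕ) < k) s, smul_zero]
    rw [stageCoeff, hzero, mul_zero]

theorem smul_sum_smul_stageMatrix (w : Fin S → Fin R → ℝ) (Δt : ℝ) :
    Δt • ∑ j, ∑ s, w j s • stageMatrix Imask Λ A Δt j s =
      ∑ k ∈ range S, Δt ^ (k + 1) • ∑ j, ∑ s, w j s • stageCoeff Imask Λ A k j s := by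
  simp only [stageMatrix, smul_sum, smul_smul]
  rw [sum_comm (s := range S)]
  refine sum_congr rfl fun j _ => ?_
  rw [sum_comm (s := range S)]
  refine sum_congr rfl fun s _ => sum_congr rfl fun k _ => ?_
  congr 1
  ring

theorem mul_one_add_sum_stageMatrix (hA : ∀ (r : Fin R) (i j : Fin S), i ≤ j → A r i j = 0)
    (Δt : ℝ) (i : Fin S) (r : Fin R) :
    Imask r * Λ * (1 + Δt • ∑ j, ∑ s, A s i j • stageMatrix Imask Λ A Δt j s) =
      stageMatrix Imask Λ A Δt i r := by
  calc Imask r * Λ * (1 + Δt • ∑ j, ∑ s, A s i j • stageMatrix Imask Λ A Δt j s)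
      = ∑ k ∈ range (S + 1), Δt ^ k • stageCoeff Imask Λ A k i r := by
        rw [mul_add, mul_one, smul_sum_smul_stageMatrix, mul_sum, sum_range_succ', pow_zero,
          one_smul, add_comm]
        simp only [mul_smul_comm, stageCoeff]
    _ = stageMatrix Imask Λ A Δt i r := by
        rw [sum_range_succ, stageCoeff_eq_zero hA i.isLt, smul_zero, add_zero, stageMatrix]

theorem stage_eq_stageMatrix_mulVec (hA : ∀ (r : Fin R) (i j : Fin S), i ≤ j → A r i j = 0)
    {Δt : ℝ} {U : Fin N → ℝ} {K : Fin S → Fin R → Fin N → ℝ}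
    (hK : ∀ i r, K i r = (Imask r * Λ) *ᵥ (U + Δt • ∑ j, ∑ s, A s i j • K j s))
    (i : Fin S) (r : Fin R) : K i r = stageMatrix Imask Λ A Δt i r *ᵥ U := by
  induction i using Fin.strong_induction_on generalizing r with
  | h i ih =>
    have hlower : ∑ j, ∑ s, A s i j • K j s =
        (∑ j, ∑ s, A s i j • stageMatrix Imask Λ A Δt j s) *ᵥ U := by
      simp only [sum_mulVec, smul_mulVec]
      refine sum_congr rfl fun j _ => sum_congr rfl fun s _ => ?_
      rcases lt_or_ge j i with hji | hij
      · rw [ih j hji s]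
      · rw [hA s i j hij, zero_smul, zero_smul]
    rw [hK, hlower, ← mul_one_add_sum_stageMatrix hA Δt i r, ← mulVec_mulVec U (Imask r * Λ),
      add_mulVec, one_mulVec, smul_mulVec]

variable (Imask Λ A) in
def stepCoeff (b : Fin S → ℝ) (k : ℕ) : Matrix (Fin N) (Fin N) ℝ :=
  ∑ i, ∑ r, b i • stageCoeff Imask Λ A k i r

theorem stepCoeff_zero (hsum : ∑ r, Imask r = 1) {b : Fin S → ℝ} (hb1 : ∑ i, b i = 1) :
    stepCoeff Imask Λ A b 0 = Λ := by
  simp only [stepCoeff, stageCoeff, ← smul_sum, ← sum_mul, hsum, one_mul, ← sum_smul, hb1,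
    one_smul]

theorem sum_smul_stageCoeff_zero_eq (hsum : ∑ r, Imask r = 1) {c : Fin S → ℝ}
    (hint : ∀ (r : Fin R) (i : Fin S), ∑ j, A r i j = c i) (i : Fin S) :
    ∑ j, ∑ s, A s i j • stageCoeff Imask Λ A 0 j s = c i • Λ := by
  rw [sum_comm]
  simp only [stageCoeff, ← sum_smul, hint, ← smul_sum, ← sum_mul, hsum, one_mul]

theorem stepCoeff_one (hsum : ∑ r, Imask r = 1) {b c : Fin S → ℝ}
    (hint : ∀ (r : Fin R) (i : Fin S), ∑ j, A r i j = c i) (hb2 : ∑ i, b i * c i = 1 / 2) :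
    stepCoeff Imask Λ A b 1 = (1 / 2 : ℝ) • Λ ^ 2 := by
  have hstage : ∀ i r, stageCoeff Imask Λ A 1 i r = c i • (Imask r * Λ ^ 2) := fun i r => by
    rw [stageCoeff, sum_smul_stageCoeff_zero_eq hsum hint, mul_smul_comm, mul_assoc, sq]
  simp only [stepCoeff, hstage, smul_smul, ← smul_sum, ← sum_mul, hsum, one_mul, ← sum_smul,
    hb2]

theorem stepCoeff_eq_zero (hA : ∀ (r : Fin R) (i j : Fin S), i ≤ j → A r i j = 0)
    (b : Fin S → ℝ) {k : ℕ} (hk : S ≤ k) : stepCoeff Imask Λ A b k = 0 :=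
  sum_eq_zero fun i _ => sum_eq_zero fun r _ => by
    rw [stageCoeff_eq_zero hA (by omega) r, smul_zero]

theorem step_eq_mulVec (hA : ∀ (r : Fin R) (i j : Fin S), i ≤ j → A r i j = 0)
    {Δt : ℝ} {U : Fin N → ℝ} {K : Fin S → Fin R → Fin N → ℝ}
    (hK : ∀ i r, K i r = (Imask r * Λ) *ᵥ (U + Δt • ∑ j, ∑ s, A s i j • K j s))
    (b : Fin S → ℝ) :
    U + Δt • ∑ i, ∑ r, b i • K i r =
      (1 + ∑ k ∈ range S, Δt ^ (k + 1) • stepCoeff Imask Λ A b k) *ᵥ U := by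
  simp only [stage_eq_stageMatrix_mulVec hA hK, ← smul_mulVec, ← sum_mulVec, add_mulVec,
    one_mulVec]
  rw [smul_sum_smul_stageMatrix]
  rfl

end PartitionedRK

open PartitionedRK

theorem stmt_5_general {N R S : ℕ}
    (Imask : Fin R → Matrix (Fin N) (Fin N) ℝ)
    (hsum : ∑ r, Imask r = 1)
    (Λ : Matrix (Fin N) (Fin N) ℝ)
    (A : Fin R → Matrix (Fin S) (Fin S) ℝ)
    (hA : ∀ (r : Fin R) (i j : Fin S), i ≤ j → A r i j = 0)
    (b c : Fin S → ℝ)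
    (hint : ∀ (r : Fin R) (i : Fin S), ∑ j, A r i j = c i)
    (hb1 : ∑ i, b i = 1)
    (hb2 : ∑ i, b i * c i = 1 / 2) :
    ∃ C : ℕ → Matrix (Fin N) (Fin N) ℝ,
      ∀ (Δt : ℝ) (U : Fin N → ℝ) (K : Fin S → Fin R → (Fin N → ℝ)),
        (∀ (i : Fin S) (r : Fin R),
          K i r = (Imask r * Λ).mulVec (U + Δt • ∑ j, ∑ s, A s i j • K j s)) →
        U + Δt • ∑ i, ∑ r, b i • K i r =
          (1 + Δt • Λ + (Δt ^ 2 / 2) • Λ ^ 2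
            + ∑ k ∈ Finset.Icc 3 S, Δt ^ k • C k).mulVec U := by
  refine ⟨fun k => stepCoeff Imask Λ A b (k - 1), fun Δt U K hK => ?_⟩
  have hexpand : ∑ k ∈ range S, Δt ^ (k + 1) • stepCoeff Imask Λ A b k =
      Δt • Λ + (Δt ^ 2 / 2) • Λ ^ 2 +
        ∑ k ∈ Icc 3 S, Δt ^ k • stepCoeff Imask Λ A b (k - 1) := by
    refine (sum_range_succ_eq_sum_Icc_one
      (fun k => Δt ^ k • stepCoeff Imask Λ A b (k - 1)) S).trans ?_
    rw [sum_Icc_one_eq_add_add_sum_Icc_three _ fun k hk => by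
      rw [stepCoeff_eq_zero hA b (by omega), smul_zero]]
    norm_num [stepCoeff_zero hsum hb1, stepCoeff_one hsum hint hb2, smul_smul, div_eq_mul_inv]
  rw [step_eq_mulVec hA hK, hexpand]
  simp only [add_assoc]

/-- Under internal consistency (`Σ_j a^(r)_{ij} = c_i`) and the order
conditions `Σ_i b_i = 1`, `Σ_i b_i c_i = 1/2`, the one-step matrix `D(Δt)` of an explicit
partitioned Runge–Kutta method applied to the coefficient-partitioned linear problem
`F r U = I^(r) Λ U` has the form
`D(Δt) = I + Δt Λ + (Δt²/2) Λ² + Σ_{k=3}^S Δt^k C_k` for some matrices `C_k`: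
the scheme is second-order consistent for the linear partitioned problem. -/
theorem stmt_5 {N R S : ℕ}
    (Imask : Fin R → Matrix (Fin N) (Fin N) ℝ)
    (hdiag : ∀ r, ∃ d : Fin N → ℝ, (∀ i, d i = 0 ∨ d i = 1) ∧ Imask r = Matrix.diagonal d)
    (hsum : ∑ r, Imask r = 1)
    (Λ : Matrix (Fin N) (Fin N) ℝ)
    (A : Fin R → Matrix (Fin S) (Fin S) ℝ)
    (hA : ∀ (r : Fin R) (i j : Fin S), i ≤ j → A r i j = 0)
    (b c : Fin S → ℝ)
    (hint : ∀ (r : Fin R) (i : Fin S), ∑ j, A r i j = c i)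
    (hb1 : ∑ i, b i = 1)
    (hb2 : ∑ i, b i * c i = 1 / 2) :
    ∃ C : ℕ → Matrix (Fin N) (Fin N) ℝ,
      ∀ (Δt : ℝ) (U : Fin N → ℝ) (K : Fin S → Fin R → (Fin N → ℝ)),
        (∀ (i : Fin S) (r : Fin R),
          K i r = (Imask r * Λ).mulVec (U + Δt • ∑ j, ∑ s, A s i j • K j s)) →
        U + Δt • ∑ i, ∑ r, b i • K i r =
          (1 + Δt • Λ + (Δt ^ 2 / 2) • Λ ^ 2
            + ∑ k ∈ Finset.Icc 3 S, Δt ^ k • C k).mulVec U :=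
  stmt_5_general Imask hsum Λ A hA b c hint hb1 hb2
end

section
/- Let S ≥ 2 and let A ∈ ℝ^{S×S} be the classic P-ERK tableau with abscissae c (c_1 = 0) and free parameters a_i = a_{i,i−1} (3 ≤ i ≤ S). Then for all 1 ≤ m ≤ S and 1 ≤ i ≤ S, the i-th entry of A^m 𝟙 (with 𝟙 the all-ones vector) equals c_{i−m+1} · Π_{j=0}^{m−2} a_{i−j} whenever i ≥ m + 1 (the product being empty for m = 1), and equals 0 whenever i ≤ m. -/
/-- The classic P-ERK Butcher tableau with `S` stages (1-based indices): the only possibly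
nonzero entries are `a_{2,1} = c 2` and, for rows `3 ≤ i ≤ S`, `a_{i,i-1} = a i` and
`a_{i,1} = c i - a i`. -/
def perkA (S : ℕ) (c a : ℕ → ℝ) : Matrix (Fin S) (Fin S) ℝ :=
  Matrix.of fun i j =>
    if (i : ℕ) + 1 = 2 ∧ (j : ℕ) + 1 = 1 then c 2
    else if 3 ≤ (i : ℕ) + 1 ∧ (j : ℕ) + 1 = (i : ℕ) then a ((i : ℕ) + 1)
    else if 3 ≤ (i : ℕ) + 1 ∧ (j : ℕ) + 1 = 1 then c ((i : ℕ) + 1) - a ((i : ℕ) + 1)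
    else 0

/-! Every row `i ≥ 2` (1-based) of `A` acts as `w ↦ (c_i - a_i) w_1 + a_i w_{i-1}`, with `a_2`
arbitrary: for row 2 both terms hit `w_1` and add up to `c_2 w_1`. Hence `A 𝟙 = c`, and `A` acts
as the weighted shift `w_i ↦ a_i w_{i-1}` on vectors with `w_1 = 0`; iterating the shift on `c`
gives the closed form. -/

section

variable {S : ℕ} (c a : ℕ → ℝ)

lemma perkA_apply_of_pos (i j : Fin S) (hi : 0 < (i : ℕ)) :
    perkA S c a i j =
      (if j = ⟨0, by omega⟩ then c (i + 1) - a (i + 1) else 0) +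
        (if j = ⟨i - 1, by omega⟩ then a (i + 1) else 0) := by
  simp only [perkA, Matrix.of_apply, Fin.ext_iff]
  generalize (i : ℕ) = n at *
  split_ifs <;> first | omega | ring1 | (obtain rfl : n = 1 := (by omega); norm_num)

lemma perkA_apply_zero (i j : Fin S) (hi : (i : ℕ) = 0) : perkA S c a i j = 0 := by
  simp only [perkA, Matrix.of_apply]
  split_ifs <;> first | rfl | omega

lemma perkA_mulVec_apply_zero (w : Fin S → ℝ) (i : Fin S) (hi : (i : ℕ) = 0) :
    (perkA S c a).mulVec w i = 0 := by
  simp [Matrix.mulVec, dotProduct, perkA_apply_zero c a i _ hi]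

lemma perkA_mulVec_apply_of_pos (w : Fin S → ℝ) (i : Fin S) (hi : 0 < (i : ℕ)) :
    (perkA S c a).mulVec w i =
      (c (i + 1) - a (i + 1)) * w ⟨0, by omega⟩ + a (i + 1) * w ⟨i - 1, by omega⟩ := by
  simp only [Matrix.mulVec, dotProduct, perkA_apply_of_pos c a i _ hi, add_mul, ite_mul,
    zero_mul, Finset.sum_add_distrib]
  rw [Finset.sum_ite_eq', Finset.sum_ite_eq']
  simp

lemma perkA_mulVec_one_apply (i : Fin S) :
    (perkA S c a).mulVec (fun _ => 1) i = if 0 < (i : ℕ) then c (i + 1) else 0 := by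
  split_ifs with hi
  · rw [perkA_mulVec_apply_of_pos c a _ i hi]
    ring
  · exact perkA_mulVec_apply_zero c a _ i (by omega)

lemma perkA_mulVec_apply_eq_shift (w : Fin S → ℝ) (hw : ∀ j : Fin S, (j : ℕ) = 0 → w j = 0)
    (i : Fin S) (hi : 0 < (i : ℕ)) :
    (perkA S c a).mulVec w i = a (i + 1) * w ⟨i - 1, by omega⟩ := by
  rw [perkA_mulVec_apply_of_pos c a w i hi, hw _ rfl, mul_zero, zero_add]

lemma perkA_pow_succ_mulVec_one_apply (n : ℕ) (i : Fin S) :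
    ((perkA S c a) ^ (n + 1)).mulVec (fun _ => 1) i =
      if n < (i : ℕ) then c (i - n + 1) * ∏ j ∈ Finset.range n, a (i + 1 - j) else 0 := by
  induction n generalizing i with
  | zero => simp [perkA_mulVec_one_apply]
  | succ n ih =>
    rw [pow_succ', ← Matrix.mulVec_mulVec]
    rcases Nat.eq_zero_or_pos (i : ℕ) with hi | hi
    · rw [perkA_mulVec_apply_zero c a _ i hi, if_neg (by omega)]
    have hw : ∀ j : Fin S, (j : ℕ) = 0 → ((perkA S c a) ^ (n + 1)).mulVec (fun _ => 1) j = 0 :=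
      fun j hj => by rw [ih, if_neg (by omega)]
    rw [perkA_mulVec_apply_eq_shift c a _ hw i hi, ih]
    dsimp only
    split_ifs with h h' h'
    · rw [Finset.prod_range_succ']
      have hprod : ∏ j ∈ Finset.range n, a (i - 1 + 1 - j) =
          ∏ j ∈ Finset.range n, a (i + 1 - (j + 1)) :=
        Finset.prod_congr rfl fun j _ => by congr 1; omega
      rw [hprod, Nat.sub_zero, show (i : ℕ) - 1 - n = i - (n + 1) by omega]
      ring
    · omega
    · omega
    · rw [mul_zero]

end

theorem stmt_8_general (S : ℕ) (c a : ℕ → ℝ) :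
    ∀ m : ℕ, 1 ≤ m → m ≤ S → ∀ i : Fin S,
      ((perkA S c a) ^ m).mulVec (fun _ => (1 : ℝ)) i =
        if m + 1 ≤ (i : ℕ) + 1 then
          c ((i : ℕ) + 1 - m + 1) * ∏ j ∈ Finset.range (m - 1), a ((i : ℕ) + 1 - j)
        else 0 := by
  rintro m hm - i
  obtain ⟨n, rfl⟩ := Nat.exists_eq_add_of_le' hm
  rw [perkA_pow_succ_mulVec_one_apply, Nat.add_sub_cancel, Nat.add_sub_add_right]
  exact if_congr (by omega) rfl rfl

/-- For the classic P-ERK tableau with `c 1 = 0`, the `i`-th entry (1-based)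
of `A^m 𝟙` equals `c_{i-m+1} ∏_{j=0}^{m-2} a_{i-j}` when `i ≥ m + 1` and `0` when `i ≤ m`. -/
theorem stmt_8 (S : ℕ) (hS : 2 ≤ S) (c a : ℕ → ℝ) (hc1 : c 1 = 0) :
    ∀ m : ℕ, 1 ≤ m → m ≤ S → ∀ i : Fin S,
      ((perkA S c a) ^ m).mulVec (fun _ => (1 : ℝ)) i =
        if m + 1 ≤ (i : ℕ) + 1 then
          c ((i : ℕ) + 1 - m + 1) * ∏ j ∈ Finset.range (m - 1), a ((i : ℕ) + 1 - j)
        else 0 :=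
  stmt_8_general S c a
end

section
/- Let S ≥ 3 and let c ∈ ℝ^S satisfy c_1 = 0 and c_i ≠ 0 for 2 ≤ i ≤ S−1, and let α_3,…,α_S ∈ ℝ all be nonzero. Then there exist unique real numbers a_3,…,a_S, all nonzero, such that the classic P-ERK tableau with abscissae c, free parameters a_i = a_{i,i−1}, and weights b = e_S has stability polynomial P(z) = 1 + z + c_S z² + Σ_{k=3}^{S} α_k z^k; they are given by the recursion a_S = α_3/c_{S−1} and a_{S−i} = α_{3+i} / (c_{S−i−1} · Π_{j=0}^{i−1} a_{S−j}) for i = 1,…,S−3. -/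
/-- The stability polynomial `P(z) = 1 + Σ_{k=1}^S (bᵀ A^{k-1} 𝟙) z^k` of an explicit
Runge–Kutta method with Butcher matrix `A` and weights `b`. -/
noncomputable def stabPoly {S : ℕ} (A : Matrix (Fin S) (Fin S) ℝ) (b : Fin S → ℝ)
    (z : ℂ) : ℂ :=
  1 + ∑ m ∈ Finset.Icc 1 S, ((∑ i, ∑ j, b i * (A ^ (m - 1)) i j : ℝ) : ℂ) * z ^ m

/-! Row 1 of the tableau is zero and row `i ≥ 3` maps `w` to `a_i w_{i-1} + (c_i - a_i) w_1`, so
on vectors vanishing in the first entry the tableau acts as a weighted down-shift. Hence the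
`i`-th entry of `A^m 𝟙` is `c_{i-m+1} a_i a_{i-1} ⋯ a_{i-m+2}`, and the coefficient of `z^k` in
the stability polynomial is `c_{S+2-k} a_S ⋯ a_{S-k+3}`. Matching coefficients prescribes every
partial product `a_S ⋯ a_{S-n+1} = α_{n+2} / c_{S-n}`; these are nonzero, so each parameter is
the quotient of two consecutive partial products, which gives existence, uniqueness and the
recursion at once. -/

open Finset Matrix

-- Row `i : Fin S` is stage `i + 1` of the tableau.
theorem perkA_mulVec_apply (S : ℕ) (c a : ℕ → ℝ) (w : Fin S → ℝ) (i : Fin S) :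
    (perkA S c a *ᵥ w) i =
      if h : 2 ≤ (i : ℕ) then
        a (i + 1) * w ⟨i - 1, by omega⟩ + (c (i + 1) - a (i + 1)) * w ⟨0, by omega⟩
      else if h : (i : ℕ) = 1 then c 2 * w ⟨0, by omega⟩
      else 0 := by
  obtain ⟨i, hi⟩ := i
  simp only [mulVec, dotProduct, perkA, of_apply, ite_mul, zero_mul]
  rcases (by omega : i = 0 ∨ i = 1 ∨ 2 ≤ i) with rfl | rfl | h2
  · simp
  · rw [Fintype.sum_eq_single ⟨0, by omega⟩ fun j hj => ?_]
    · simp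
    · have : (j : ℕ) ≠ 0 := Fin.val_ne_of_ne hj
      simp (disch := omega) only [if_neg]
  · rw [dif_pos h2, Fintype.sum_eq_add ⟨i - 1, by omega⟩ ⟨0, by omega⟩
      (Fin.ne_of_val_ne (by simp only; omega)) fun j hj => ?_]
    · simp (disch := omega) only [if_neg, if_pos, and_true]
    · have : (j : ℕ) ≠ i - 1 := Fin.val_ne_of_ne hj.1
      have : (j : ℕ) ≠ 0 := Fin.val_ne_of_ne hj.2
      simp (disch := omega) only [if_neg]

theorem perkA_pow_succ_mulVec_one (S : ℕ) (c a : ℕ → ℝ) (m : ℕ) (i : Fin S) :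
    (perkA S c a ^ (m + 1) *ᵥ 1) i =
      if m < i then c (i + 1 - m) * ∏ j ∈ range m, a (i + 1 - j) else 0 := by
  induction m generalizing i with
  | zero =>
    obtain ⟨i, hi⟩ := i
    rw [pow_one, perkA_mulVec_apply]
    rcases (by omega : i = 0 ∨ i = 1 ∨ 2 ≤ i) with rfl | rfl | h2
    · simp
    · simp
    · simp [h2, show 0 < i by omega]
  | succ m ih =>
    obtain ⟨i, hi⟩ := i
    have hw0 : (perkA S c a ^ (m + 1) *ᵥ 1) ⟨0, by omega⟩ = 0 := by
      rw [ih, if_neg (Nat.not_lt_zero m)]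
    rw [pow_succ', ← mulVec_mulVec, perkA_mulVec_apply]
    simp only [hw0, mul_zero, add_zero]
    by_cases hi2 : 2 ≤ i
    · rw [dif_pos hi2, ih]
      by_cases hm : m + 1 < i
      · rw [if_pos (by simp only; omega), if_pos hm, prod_range_succ',
          Nat.sub_add_cancel (by omega : 1 ≤ i), Nat.sub_zero,
          show i + 1 - (m + 1) = i - m by omega]
        simp only [Nat.add_sub_add_right]
        ring
      · rw [if_neg (by simp only; omega), if_neg hm, mul_zero]
    · rw [dif_neg hi2, if_neg (by omega)]
      split_ifs <;> rfl

theorem stabPoly_eq_dotProduct {S : ℕ} (A : Matrix (Fin S) (Fin S) ℝ) (b : Fin S → ℝ) (z : ℂ) :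
    stabPoly A b z = 1 + ∑ m ∈ Icc 1 S, ((b ⬝ᵥ (A ^ (m - 1) *ᵥ 1) : ℝ) : ℂ) * z ^ m := by
  simp only [stabPoly, dotProduct, mulVec, Pi.one_apply, mul_one, mul_sum]

theorem lastWeights_dotProduct {S : ℕ} (hS : 0 < S) (v : Fin S → ℝ) :
    (fun i : Fin S => if (i : ℕ) + 1 = S then (1 : ℝ) else 0) ⬝ᵥ v = v ⟨S - 1, by omega⟩ := by
  rw [dotProduct, Fintype.sum_eq_single ⟨S - 1, by omega⟩ fun i hi => ?_]
  · simp [show S - 1 + 1 = S by omega]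
  · have : (i : ℕ) ≠ S - 1 := Fin.val_ne_of_ne hi
    simp [show (i : ℕ) + 1 ≠ S by omega]

theorem perkA_stabPoly_coeff (S : ℕ) (c a : ℕ → ℝ) (k : ℕ) (hk : 2 ≤ k) (hkS : k ≤ S) :
    (fun i : Fin S => if (i : ℕ) + 1 = S then (1 : ℝ) else 0) ⬝ᵥ (perkA S c a ^ (k - 1) *ᵥ 1) =
      c (S + 2 - k) * ∏ j ∈ range (k - 2), a (S - j) := by
  rw [lastWeights_dotProduct (by omega), show k - 1 = k - 2 + 1 by omega,
    perkA_pow_succ_mulVec_one, if_pos (by simp only; omega)]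
  simp only [show S - 1 + 1 = S by omega, show S - (k - 2) = S + 2 - k by omega]

theorem perkA_stabPoly (S : ℕ) (hS : 2 ≤ S) (c a : ℕ → ℝ) (z : ℂ) :
    stabPoly (perkA S c a) (fun i => if (i : ℕ) + 1 = S then 1 else 0) z =
      1 + z + (c S : ℂ) * z ^ 2 +
        ∑ k ∈ Icc 3 S, ((c (S + 2 - k) * ∏ j ∈ range (k - 2), a (S - j) : ℝ) : ℂ) * z ^ k := by
  have hIcc : Icc 1 S = insert 1 (insert 2 (Icc 3 S)) := by ext; simp; omega
  rw [stabPoly_eq_dotProduct, hIcc, sum_insert (by simp),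
    sum_insert (by simp), sum_congr rfl fun k hk => by
      rw [perkA_stabPoly_coeff S c a k (by simp at hk; omega) (by simp at hk; omega)]]
  rw [perkA_stabPoly_coeff S c a 2 le_rfl hS, Nat.sub_self, pow_zero, one_mulVec,
    lastWeights_dotProduct (by omega)]
  simp only [Pi.one_apply, Nat.add_sub_cancel, range_zero, prod_empty]
  push_cast
  ring

theorem Polynomial.coeff_eq_of_forall_sum_mul_pow_eq {R : Type*} [CommRing R] [IsDomain R]
    [Infinite R] {s : Finset ℕ} {β γ : ℕ → R}
    (h : ∀ z, ∑ k ∈ s, β k * z ^ k = ∑ k ∈ s, γ k * z ^ k) {k : ℕ} (hk : k ∈ s) :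
    β k = γ k := by
  have hp : ∑ k ∈ s, C (β k) * X ^ k = ∑ k ∈ s, C (γ k) * X ^ k :=
    Polynomial.funext fun z => by simpa [eval_finsetSum] using h z
  simpa [finsetSum_coeff, coeff_C_mul_X_pow, hk] using congrArg (coeff · k) hp

theorem perkA_stabPoly_eq_iff (S : ℕ) (hS : 2 ≤ S) (c a α : ℕ → ℝ) :
    (∀ z : ℂ, stabPoly (perkA S c a) (fun i => if (i : ℕ) + 1 = S then 1 else 0) z
        = 1 + z + (c S : ℂ) * z ^ 2 + ∑ k ∈ Icc 3 S, (α k : ℂ) * z ^ k) ↔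
      ∀ k ∈ Icc 3 S, c (S + 2 - k) * ∏ j ∈ range (k - 2), a (S - j) = α k := by
  simp only [perkA_stabPoly S hS, add_right_inj]
  refine ⟨fun h k hk => ?_, fun h z => sum_congr rfl fun k hk => by rw [h k hk]⟩
  exact_mod_cast Polynomial.coeff_eq_of_forall_sum_mul_pow_eq h hk

theorem Finset.prod_range_eq_iff_eq_div {M : Type*} [CommGroupWithZero M] {f P : ℕ → M} {N : ℕ}
    (h0 : P 0 = 1) (hP : ∀ n < N, P n ≠ 0) :
    (∀ n ≤ N, ∏ j ∈ range n, f j = P n) ↔ ∀ j < N, f j = P (j + 1) / P j := by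
  refine ⟨fun h j hj => ?_, fun h n => ?_⟩
  · rw [← h (j + 1) hj, ← h j hj.le, prod_range_succ,
      mul_div_cancel_left₀ _ (h j hj.le ▸ hP j hj)]
  · induction n with
    | zero => simp [h0]
    | succ n ih =>
      intro hn
      rw [prod_range_succ, ih (by omega), h n hn, mul_div_cancel₀ _ (hP n hn)]

/-- The value of `a_S a_{S-1} ⋯ a_{S-n+1}` prescribed by the coefficient of `z^(n+2)`. -/
noncomputable def perkParamProd (S : ℕ) (c α : ℕ → ℝ) (n : ℕ) : ℝ :=
  if n = 0 then 1 else α (n + 2) / c (S - n)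

section
variable {S : ℕ} {c α : ℕ → ℝ}

theorem perkParamProd_ne_zero (hc : ∀ i, 2 ≤ i → i ≤ S - 1 → c i ≠ 0)
    (hα : ∀ k, 3 ≤ k → k ≤ S → α k ≠ 0) {n : ℕ} (hn : n ≤ S - 2) :
    perkParamProd S c α n ≠ 0 := by
  unfold perkParamProd
  split_ifs with h0
  · exact one_ne_zero
  · exact div_ne_zero (hα _ (by omega) (by omega)) (hc _ (by omega) (by omega))

theorem perk_coeff_eq_iff_prod_eq (hc : ∀ i, 2 ≤ i → i ≤ S - 1 → c i ≠ 0) (x : ℕ → ℝ) :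
    (∀ k ∈ Icc 3 S, c (S + 2 - k) * ∏ j ∈ range (k - 2), x j = α k) ↔
      ∀ n ≤ S - 2, ∏ j ∈ range n, x j = perkParamProd S c α n := by
  have hcoeff (n : ℕ) (hn : 1 ≤ n) (hnS : n ≤ S - 2) :
      c (S + 2 - (n + 2)) * ∏ j ∈ range (n + 2 - 2), x j = α (n + 2) ↔
        ∏ j ∈ range n, x j = perkParamProd S c α n := by
    rw [perkParamProd, if_neg (by omega), eq_div_iff (hc _ (by omega) (by omega)),
      Nat.add_sub_cancel, show S + 2 - (n + 2) = S - n by omega, mul_comm]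
  refine ⟨fun h n hn => ?_, fun h k hk => ?_⟩
  · rcases Nat.eq_zero_or_pos n with rfl | hn0
    · simp [perkParamProd]
    · exact (hcoeff n hn0 hn).1 (h (n + 2) (by simp; omega))
  · obtain ⟨n, rfl⟩ : ∃ n, k = n + 2 := ⟨k - 2, by simp at hk; omega⟩
    simp only [mem_Icc] at hk
    exact (hcoeff n (by omega) (by omega)).2 (h n (by omega))

end

theorem stmt_10_general (S : ℕ) (hS : 3 ≤ S) (c : ℕ → ℝ)
    (hc : ∀ i, 2 ≤ i → i ≤ S - 1 → c i ≠ 0)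
    (α : ℕ → ℝ) (hα : ∀ k, 3 ≤ k → k ≤ S → α k ≠ 0) :
    ∃ a : ℕ → ℝ,
      (∀ i, 3 ≤ i → i ≤ S → a i ≠ 0) ∧
      (∀ z : ℂ, stabPoly (perkA S c a) (fun i => if (i : ℕ) + 1 = S then 1 else 0) z
          = 1 + z + (c S : ℂ) * z ^ 2 + ∑ k ∈ Finset.Icc 3 S, (α k : ℂ) * z ^ k) ∧
      a S = α 3 / c (S - 1) ∧
      (∀ i, 1 ≤ i → i ≤ S - 3 →
        a (S - i) = α (3 + i) / (c (S - i - 1) * ∏ j ∈ Finset.range i, a (S - j))) ∧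
      (∀ a' : ℕ → ℝ,
        (∀ z : ℂ, stabPoly (perkA S c a') (fun i => if (i : ℕ) + 1 = S then 1 else 0) z
            = 1 + z + (c S : ℂ) * z ^ 2 + ∑ k ∈ Finset.Icc 3 S, (α k : ℂ) * z ^ k) →
        ∀ i, 3 ≤ i → i ≤ S → a' i = a i) := by
  set P := perkParamProd S c α
  have hP0 : P 0 = 1 := if_pos rfl
  have hP (n : ℕ) (hn : n < S - 2) : P n ≠ 0 := perkParamProd_ne_zero hc hα hn.le
  have key (a' : ℕ → ℝ) :
      (∀ z : ℂ, stabPoly (perkA S c a') (fun i => if (i : ℕ) + 1 = S then 1 else 0) z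
          = 1 + z + (c S : ℂ) * z ^ 2 + ∑ k ∈ Finset.Icc 3 S, (α k : ℂ) * z ^ k) ↔
        ∀ j < S - 2, a' (S - j) = P (j + 1) / P j := by
    rw [perkA_stabPoly_eq_iff S (by omega), perk_coeff_eq_iff_prod_eq hc,
      prod_range_eq_iff_eq_div hP0 hP]
  set a : ℕ → ℝ := fun i => P (S - i + 1) / P (S - i)
  have ha (j : ℕ) (hj : j ≤ S) : a (S - j) = P (j + 1) / P j := by
    simp only [a, Nat.sub_sub_self hj]
  have hprod : ∀ n ≤ S - 2, ∏ j ∈ range n, a (S - j) = P n :=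
    (prod_range_eq_iff_eq_div hP0 hP).2 fun j hj => ha j (by omega)
  refine ⟨a, fun i hi hiS => ?_, (key a).2 fun j hj => ha j (by omega), ?_, fun i hi hiS => ?_,
    fun a' ha' i hi hiS => ?_⟩
  · exact div_ne_zero (perkParamProd_ne_zero hc hα (by omega))
      (perkParamProd_ne_zero hc hα (by omega))
  · simp [a, P, perkParamProd]
  · rw [ha i (by omega), hprod i (by omega), ← div_div]
    simp [P, perkParamProd, add_comm, Nat.sub_sub]
  · obtain ⟨j, rfl⟩ : ∃ j, i = S - j := ⟨S - i, by omega⟩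
    rw [(key a').1 ha' j (by omega), ha j (by omega)]

/-- Given abscissae `c` with `c 1 = 0` and `c i ≠ 0` for `2 ≤ i ≤ S-1`, and
nonzero monomial coefficients `α_3, …, α_S`, there exist unique nonzero free parameters
`a_3, …, a_S` such that the classic P-ERK tableau with weights `b = e_S` has stability
polynomial `1 + z + c_S z² + Σ_{k=3}^S α_k z^k`; they are given by the recursion
`a_S = α_3 / c_{S-1}`, `a_{S-i} = α_{3+i} / (c_{S-i-1} ∏_{j=0}^{i-1} a_{S-j})`. -/
theorem stmt_10 (S : ℕ) (hS : 3 ≤ S) (c : ℕ → ℝ) (hc1 : c 1 = 0)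
    (hc : ∀ i, 2 ≤ i → i ≤ S - 1 → c i ≠ 0)
    (α : ℕ → ℝ) (hα : ∀ k, 3 ≤ k → k ≤ S → α k ≠ 0) :
    ∃ a : ℕ → ℝ,
      (∀ i, 3 ≤ i → i ≤ S → a i ≠ 0) ∧
      (∀ z : ℂ, stabPoly (perkA S c a) (fun i => if (i : ℕ) + 1 = S then 1 else 0) z
          = 1 + z + (c S : ℂ) * z ^ 2 + ∑ k ∈ Finset.Icc 3 S, (α k : ℂ) * z ^ k) ∧
      a S = α 3 / c (S - 1) ∧
      (∀ i, 1 ≤ i → i ≤ S - 3 →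
        a (S - i) = α (3 + i) / (c (S - i - 1) * ∏ j ∈ Finset.range i, a (S - j))) ∧
      (∀ a' : ℕ → ℝ,
        (∀ z : ℂ, stabPoly (perkA S c a') (fun i => if (i : ℕ) + 1 = S then 1 else 0) z
            = 1 + z + (c S : ℂ) * z ^ 2 + ∑ k ∈ Finset.Icc 3 S, (α k : ℂ) * z ^ k) →
        ∀ i, 3 ≤ i → i ≤ S → a' i = a i) :=
  stmt_10_general S hS c hc α hα
end

section
/- Let γ : ℤ → ℝ have finite support, and define the linear constant-coefficient one-step scheme D by (Du)_j = Σ_{k∈ℤ} γ_k u_{j+k} for u : ℤ → ℝ. Then D is monotonicity preserving — i.e., Du is nondecreasing for every nondecreasing u : ℤ → ℝ — if and only if γ_k ≥ 0 for all k ∈ ℤ. -/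
/-!
Nonnegative coefficients preserve monotonicity term by term. Conversely, the unit step
`u = 𝟙_{(k₀, ∞)}` is nondecreasing and `u (j + 1) - u j` is the indicator of `j = k₀`, so the scheme
applied to it increases from `j = 0` to `j = 1` by exactly `γ k₀`, which must therefore be `≥ 0`.
-/

namespace Stencil

variable {R : Type*}

theorem monotone_sum_mul_shift [Semiring R] [PartialOrder R] [IsOrderedRing R]
    {s : Finset ℤ} {γ : ℤ → R} (hγ : ∀ k ∈ s, 0 ≤ γ k) {u : ℤ → R} (hu : Monotone u) :
    Monotone fun j => ∑ k ∈ s, γ k * u (j + k) :=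
  fun _ _ hab => Finset.sum_le_sum fun k hk =>
    mul_le_mul_of_nonneg_left (hu (add_le_add_left hab k)) (hγ k hk)

def step [Zero R] [One R] (a j : ℤ) : R := if a < j then 1 else 0

theorem monotone_step [Zero R] [One R] [Preorder R] [ZeroLEOneClass R] (a : ℤ) :
    Monotone (step (R := R) a) := by
  intro i j hij
  unfold step
  split_ifs <;> first | rfl | exact zero_le_one | omega

theorem step_one_add [AddMonoidWithOne R] (a k : ℤ) :
    step (R := R) a (1 + k) = step a (0 + k) + if k = a then 1 else 0 := by
  unfold step
  split_ifs <;> first | omega | simp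

theorem sum_mul_step_one_add [Semiring R] {s : Finset ℤ} {a : ℤ} (ha : a ∈ s) (γ : ℤ → R) :
    ∑ k ∈ s, γ k * step a (1 + k) = ∑ k ∈ s, γ k * step a (0 + k) + γ a := by
  simp only [step_one_add, mul_add, mul_ite, mul_one, mul_zero, Finset.sum_add_distrib,
    Finset.sum_ite_eq' s a, if_pos ha]

theorem nonneg_of_monotone_sum_mul_shift [Ring R] [PartialOrder R] [IsOrderedRing R]
    {s : Finset ℤ} {γ : ℤ → R}
    (H : ∀ u : ℤ → R, Monotone u → Monotone fun j => ∑ k ∈ s, γ k * u (j + k))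
    {a : ℤ} (ha : a ∈ s) : 0 ≤ γ a := by
  have h := H (step a) (monotone_step a) zero_le_one
  simp only [sum_mul_step_one_add ha] at h
  exact le_add_iff_nonneg_right _ |>.mp h

end Stencil

/-- A linear constant-coefficient one-step scheme
`(Du)_j = Σ_k γ_k u_{j+k}` (with finitely supported stencil `γ : ℤ → ℝ`) is monotonicity
preserving — it maps nondecreasing sequences to nondecreasing sequences — if and only if all
stencil coefficients are nonnegative. -/
theorem stmt_13 (γ : ℤ → ℝ) (hfin : (Function.support γ).Finite) :
    (∀ u : ℤ → ℝ, Monotone u →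
        Monotone (fun j : ℤ => ∑ k ∈ hfin.toFinset, γ k * u (j + k)))
      ↔ ∀ k : ℤ, 0 ≤ γ k := by
  refine ⟨fun H k => ?_, fun hγ u hu => Stencil.monotone_sum_mul_shift (fun k _ => hγ k) hu⟩
  by_cases hk : γ k = 0
  · exact hk.ge
  · exact Stencil.nonneg_of_monotone_sum_mul_shift H (by simpa using hk)
end
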